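/- arXiv:math/0505545 — 3 statements merged into one kernel-verified Lean document; each statement's English description precedes it below -/
import Mathlib

section
/- The generating function f(x,y) = (1/(1-xy))·√((1+x)/(1-x))·√((1-y)/(1+y)) satisfies the differential equation (x ∂/∂x - y ∂/∂y) f(x,y) = (x+y)(1+x)(1-y) / ((1-x²)^{3/2}(1-y²)^{3/2}). -/
set_option maxHeartbeats 2000000

/-- `f(x,y) = (1/(1-xy))·√((1+x)/(1-x))·√((1-y)/(1+y))`. -/
noncomputable def pillowF (x y : ℝ) : ℝ :=
  (1 / (1 - x * y)) * Real.sqrt ((1 + x) / (1 - x)) * Real.sqrt ((1 - y) / (1 + y))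

lemma pillow_eq {a b : ℝ} (ha : |a| < 1) (hb : |b| < 1) :
    pillowF a b = (1 + a) * (1 - b) /
      ((1 - a * b) * Real.sqrt (1 - a ^ 2) * Real.sqrt (1 - b ^ 2)) := by
  have ha1 : -1 < a := (abs_lt.1 ha).1
  have ha2 : a < 1 := (abs_lt.1 ha).2
  have hb1 : -1 < b := (abs_lt.1 hb).1
  have hb2 : b < 1 := (abs_lt.1 hb).2
  have h1 : (1 + a) / (1 - a) = (1 + a) ^ 2 / (1 - a ^ 2) := by
    rw [div_eq_div_iff (by linarith) (by nlinarith)]; ring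
  have h2 : (1 - b) / (1 + b) = (1 - b) ^ 2 / (1 - b ^ 2) := by
    rw [div_eq_div_iff (by linarith) (by nlinarith)]; ring
  rw [pillowF, h1, h2, Real.sqrt_div (sq_nonneg _), Real.sqrt_div (sq_nonneg _),
    Real.sqrt_sq (by linarith), Real.sqrt_sq (by linarith)]
  rw [div_mul_div_comm, div_mul_div_comm, one_mul]

/-- `(x ∂/∂x - y ∂/∂y) f(x,y) = (x+y)(1+x)(1-y)/((1-x²)^{3/2}(1-y²)^{3/2})`. -/
theorem stmt1 (x y : ℝ) (hx : |x| < 1) (hy : |y| < 1) (hxy : x * y ≠ 1) :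
    x * deriv (fun t => pillowF t y) x - y * deriv (fun t => pillowF x t) y =
      (x + y) * (1 + x) * (1 - y) /
        (((1 - x ^ 2) * Real.sqrt (1 - x ^ 2)) *
          ((1 - y ^ 2) * Real.sqrt (1 - y ^ 2))) := by
  have hx1 : -1 < x := (abs_lt.1 hx).1
  have hx2' : x < 1 := (abs_lt.1 hx).2
  have hy1 : -1 < y := (abs_lt.1 hy).1
  have hy2' : y < 1 := (abs_lt.1 hy).2
  have hx2 : (1 : ℝ) - x ^ 2 ≠ 0 := by nlinarith
  have hy2 : (1 : ℝ) - y ^ 2 ≠ 0 := by nlinarith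
  have hApos : 0 < Real.sqrt (1 - x ^ 2) := Real.sqrt_pos.2 (by nlinarith)
  have hBpos : 0 < Real.sqrt (1 - y ^ 2) := Real.sqrt_pos.2 (by nlinarith)
  have hA : Real.sqrt (1 - x ^ 2) ≠ 0 := ne_of_gt hApos
  have hB : Real.sqrt (1 - y ^ 2) ≠ 0 := ne_of_gt hBpos
  have hxy0 : (1 : ℝ) - x * y ≠ 0 := sub_ne_zero.2 (Ne.symm hxy)
  -- x-direction derivative
  have hdX : HasDerivAt (fun t : ℝ => (1 + t) * (1 - y) /
        ((1 - t * y) * Real.sqrt (1 - t ^ 2) * Real.sqrt (1 - y ^ 2)))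
      ((1 * (1 - y) * ((1 - x * y) * Real.sqrt (1 - x ^ 2) * Real.sqrt (1 - y ^ 2)) -
          (1 + x) * (1 - y) *
            ((-y * Real.sqrt (1 - x ^ 2) +
                (1 - x * y) * (1 / (2 * Real.sqrt (1 - x ^ 2)) * -(2 * x))) *
              Real.sqrt (1 - y ^ 2))) /
        ((1 - x * y) * Real.sqrt (1 - x ^ 2) * Real.sqrt (1 - y ^ 2)) ^ 2) x := by
    have hnum : HasDerivAt (fun t : ℝ => (1 + t) * (1 - y)) (1 * (1 - y)) x := by
      simpa using ((hasDerivAt_id x).const_add 1).mul_const (1 - y)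
    have h1 : HasDerivAt (fun t : ℝ => 1 - t ^ 2) (-(2 * x)) x := by
      simpa using (hasDerivAt_pow 2 x).const_sub 1
    have hs : HasDerivAt (fun t : ℝ => Real.sqrt (1 - t ^ 2))
        (1 / (2 * Real.sqrt (1 - x ^ 2)) * -(2 * x)) x :=
      (Real.hasDerivAt_sqrt hx2).comp x h1
    have hlin : HasDerivAt (fun t : ℝ => 1 - t * y) (-y) x := by
      simpa using ((hasDerivAt_id x).mul_const y).const_sub 1
    exact hnum.div ((hlin.mul hs).mul_const (Real.sqrt (1 - y ^ 2)))
      (mul_ne_zero (mul_ne_zero hxy0 hA) hB)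
  -- y-direction derivative
  have hdY : HasDerivAt (fun t : ℝ => (1 + x) * (1 - t) /
        ((1 - x * t) * Real.sqrt (1 - x ^ 2) * Real.sqrt (1 - t ^ 2)))
      (((1 + x) * -1 * ((1 - x * y) * Real.sqrt (1 - x ^ 2) * Real.sqrt (1 - y ^ 2)) -
          (1 + x) * (1 - y) *
            ((-x * Real.sqrt (1 - x ^ 2)) * Real.sqrt (1 - y ^ 2) +
              ((1 - x * y) * Real.sqrt (1 - x ^ 2)) *
                (1 / (2 * Real.sqrt (1 - y ^ 2)) * -(2 * y)))) /
        ((1 - x * y) * Real.sqrt (1 - x ^ 2) * Real.sqrt (1 - y ^ 2)) ^ 2) y := by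
    have hnum : HasDerivAt (fun t : ℝ => (1 + x) * (1 - t)) ((1 + x) * -1) y := by
      simpa using ((hasDerivAt_id y).const_sub 1).const_mul (1 + x)
    have h1 : HasDerivAt (fun t : ℝ => 1 - t ^ 2) (-(2 * y)) y := by
      simpa using (hasDerivAt_pow 2 y).const_sub 1
    have hs : HasDerivAt (fun t : ℝ => Real.sqrt (1 - t ^ 2))
        (1 / (2 * Real.sqrt (1 - y ^ 2)) * -(2 * y)) y :=
      (Real.hasDerivAt_sqrt hy2).comp y h1
    have hlin : HasDerivAt (fun t : ℝ => 1 - x * t) (-x) y := by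
      simpa using ((hasDerivAt_id y).const_mul x).const_sub 1
    exact hnum.div (((hlin.mul_const (Real.sqrt (1 - x ^ 2))).mul hs))
      (mul_ne_zero (mul_ne_zero hxy0 hA) hB)
  have hopen : IsOpen {t : ℝ | |t| < 1} := isOpen_Iio.preimage continuous_abs
  have hevX : (fun t => pillowF t y) =ᶠ[nhds x] (fun t : ℝ => (1 + t) * (1 - y) /
      ((1 - t * y) * Real.sqrt (1 - t ^ 2) * Real.sqrt (1 - y ^ 2))) := by
    filter_upwards [hopen.mem_nhds hx] with t ht
    exact pillow_eq ht hy
  have hevY : (fun t => pillowF x t) =ᶠ[nhds y] (fun t : ℝ => (1 + x) * (1 - t) /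
      ((1 - x * t) * Real.sqrt (1 - x ^ 2) * Real.sqrt (1 - t ^ 2))) := by
    filter_upwards [hopen.mem_nhds hy] with t ht
    exact pillow_eq hx ht
  have hA2 : Real.sqrt (1 - x ^ 2) * Real.sqrt (1 - x ^ 2) = 1 - x ^ 2 :=
    Real.mul_self_sqrt (by nlinarith)
  have hB2 : Real.sqrt (1 - y ^ 2) * Real.sqrt (1 - y ^ 2) = 1 - y ^ 2 :=
    Real.mul_self_sqrt (by nlinarith)
  set A := Real.sqrt (1 - x ^ 2) with hAdef
  set B := Real.sqrt (1 - y ^ 2) with hBdef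
  have hdx : deriv (fun t => pillowF t y) x =
      (1 - y) * ((1 - x ^ 2) * (1 + y) + x * (1 + x) * (1 - x * y)) /
        ((1 - x * y) ^ 2 * ((1 - x ^ 2) * A) * B) := by
    rw [hevX.deriv_eq, hdX.deriv, ← hA2]
    field_simp
    ring
  have hdy : deriv (fun t => pillowF x t) y =
      (1 + x) * (y * (1 - y) * (1 - x * y) - (1 - y ^ 2) * (1 - x)) /
        ((1 - x * y) ^ 2 * ((1 - y ^ 2) * B) * A) := by
    rw [hevY.deriv_eq, hdY.deriv, ← hB2]
    field_simp
    ring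
  rw [hdx, hdy]
  field_simp
  ring
end

section
/- For a partition λ with at most N parts, the number of standard Young tableaux of shape λ divided by |λ|! equals ∏_{1≤i<j≤N}(λ_i - λ_j + j - i) / ∏_{i=1}^{N} (λ_i + N - i)!. -/
/-! The proof is an induction on `|λ|` along the branching rule: in a standard tableau the
entry `|λ|` sits in a corner cell, and erasing it gives `f^λ = ∑_{corners i} f^{λ - e_i}`.
In the shifted parts `ℓ_i = λ_i + N - i`, the right-hand side is `F(ℓ) = Δ(ℓ) / ∏ ℓ_i!` with
`Δ(ℓ) = ∏_{i<j} (ℓ_i - ℓ_j)`, and `F(ℓ - e_i) = w_i F(ℓ)` for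
`w_i = ℓ_i ∏_{j ≠ i} (ℓ_i - 1 - ℓ_j) / (ℓ_i - ℓ_j)`, which vanishes unless row `i` ends in a
corner. Lagrange interpolation gives `∑ w_i = ∑ ℓ_i - C(N, 2) = |λ|`, so `|λ|! F(ℓ)` satisfies
the same recursion as `f^λ`. -/

/-- The number of standard Young tableaux of shape `λ = (lam 0 ≥ lam 1 ≥ …)` with at most `N`
rows: fillings of the cells `{(i,j) : j < lam i}` by `1, …, |λ|`, bijectively, increasing
along rows and down columns. -/
noncomputable def sytCount (N : ℕ) (lam : Fin N → ℕ) : ℕ :=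
  Nat.card {T : Fin N × ℕ → ℕ //
    (∀ p : Fin N × ℕ, ¬ p.2 < lam p.1 → T p = 0) ∧
    Set.BijOn T {p : Fin N × ℕ | p.2 < lam p.1} (Set.Icc 1 (∑ i, lam i)) ∧
    (∀ (i : Fin N) (j j' : ℕ), j < j' → j' < lam i → T (i, j) < T (i, j')) ∧
    (∀ (i i' : Fin N) (j : ℕ), i < i' → j < lam i' → T (i, j) < T (i', j))}

open Finset Polynomial Lagrange

section ShiftIdentity

variable {R : Type*} [CommRing R] {ι : Type*}

/-- The remainder of `X * ∏ (X - a i - 1)` modulo `∏ (X - a i)`. -/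
noncomputable def nodalShiftRemainder (s : Finset ι) (a : ι → R) : R[X] :=
  X * nodal s (fun i => a i + 1) - (X - (#s : R[X])) * nodal s a

lemma nodalShiftRemainder_cons (s : Finset ι) (a : ι → R) {b : ι} (hb : b ∉ s) :
    nodalShiftRemainder (s.cons b hb) a =
      nodalShiftRemainder s a * (X - C (a b + 1)) + C ((#s : R) - a b) * nodal s a := by
  simp only [nodalShiftRemainder, nodal, prod_cons, card_cons, map_add, map_sub, map_natCast,
    map_one, Nat.cast_add, Nat.cast_one]
  ring

lemma coeff_nodal_card [Nontrivial R] (s : Finset ι) (a : ι → R) : (nodal s a).coeff #s = 1 := by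
  simpa [natDegree_nodal] using (nodal_monic (s := s) (v := a)).coeff_natDegree

lemma coeff_nodal_of_card_lt [Nontrivial R] (s : Finset ι) (a : ι → R) {m : ℕ} (hm : #s < m) :
    (nodal s a).coeff m = 0 :=
  coeff_eq_zero_of_natDegree_lt (by rwa [natDegree_nodal])

lemma coeff_nodalShiftRemainder [Nontrivial R] (s : Finset ι) (a : ι → R) :
    (∀ m, #s ≤ m → (nodalShiftRemainder s a).coeff m = 0) ∧
      (X * nodalShiftRemainder s a).coeff #s = ((#s).choose 2 : R) - ∑ i ∈ s, a i := by
  induction s using Finset.cons_induction with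
  | empty => simp [nodalShiftRemainder, nodal_empty]
  | cons b s hb ih =>
    obtain ⟨hhigh, htop⟩ := ih
    rw [nodalShiftRemainder_cons, card_cons]
    refine ⟨fun m hm => ?_, ?_⟩
    · obtain ⟨k, rfl⟩ : ∃ k, m = k + 1 := ⟨m - 1, by omega⟩
      rw [coeff_add, coeff_mul_X_sub_C, coeff_C_mul, hhigh k (by omega), hhigh (k + 1) (by omega),
        coeff_nodal_of_card_lt s a (by omega)]
      ring
    · rw [mul_add, ← mul_assoc, coeff_add, coeff_mul_X_sub_C, coeff_X_mul, mul_left_comm,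
        coeff_C_mul, coeff_X_mul, htop, hhigh _ le_rfl, coeff_nodal_card, sum_cons,
        Nat.choose_succ_succ', Nat.choose_one_right]
      push_cast
      ring

end ShiftIdentity

theorem sum_mul_prod_sub_one_div_prod_sub {K : Type*} [Field K] {ι : Type*} [DecidableEq ι]
    (s : Finset ι) (v : ι → K) (hv : Set.InjOn v s) :
    ∑ i ∈ s, v i * (∏ j ∈ s.erase i, (v i - 1 - v j)) / ∏ j ∈ s.erase i, (v i - v j) =
      ∑ i ∈ s, v i - ((#s).choose 2 : K) := by
  obtain ⟨hhigh, htop⟩ := coeff_nodalShiftRemainder s v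
  rcases s.eq_empty_or_nonempty with rfl | hs
  · simp
  have hdeg : (nodalShiftRemainder s v).degree < #s :=
    degree_lt_iff_coeff_zero _ _ |>.mpr fun m hm => hhigh m (by exact_mod_cast hm)
  have heval : ∀ i ∈ s, (nodalShiftRemainder s v).eval (v i) =
      -(v i * ∏ j ∈ s.erase i, (v i - 1 - v j)) := by
    intro i hi
    rw [nodalShiftRemainder, eval_sub, eval_mul, eval_mul, eval_nodal_at_node hi, mul_zero,
      sub_zero, eval_X, eval_nodal, ← mul_prod_erase s _ hi]
    simp only [prod_congr rfl fun j _ => show v i - (v j + 1) = v i - 1 - v j by ring]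
    ring
  have hcoeff := coeff_eq_sum hv hdeg
  rw [sum_congr rfl fun i hi => by rw [heval i hi, neg_div], sum_neg_distrib,
    ← coeff_X_mul, Nat.sub_add_cancel hs.card_pos, htop] at hcoeff
  linear_combination hcoeff

section PairProducts

variable {ι : Type*} [Fintype ι] [LinearOrder ι]

lemma prod_pairs_lt_containing_eq_prod_erase {M : Type*} [CommMonoid M] (i₀ : ι) (h : ι → M) :
    ∏ p ∈ univ.filter (fun p : ι × ι => p.1 < p.2 ∧ (p.1 = i₀ ∨ p.2 = i₀)),
        h (if p.1 = i₀ then p.2 else p.1) = ∏ j ∈ univ.erase i₀, h j := by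
  refine prod_nbij' (fun p => if p.1 = i₀ then p.2 else p.1)
    (fun j => if i₀ < j then (i₀, j) else (j, i₀)) ?_ ?_ ?_ ?_ (fun _ _ => rfl) <;>
  · intro p hp
    simp only [mem_filter, mem_univ, true_and, mem_erase, ne_eq] at hp ⊢
    grind

lemma prod_pairs_lt_sub_update_mul {K : Type*} [CommRing K] (x : ι → K) (i₀ : ι) (y : K) :
    (∏ p ∈ univ.filter (fun p : ι × ι => p.1 < p.2),
        (Function.update x i₀ y p.1 - Function.update x i₀ y p.2)) *
      ∏ j ∈ univ.erase i₀, (x i₀ - x j) =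
    (∏ p ∈ univ.filter (fun p : ι × ι => p.1 < p.2), (x p.1 - x p.2)) *
      ∏ j ∈ univ.erase i₀, (y - x j) := by
  set x' := Function.update x i₀ y
  simp only [← prod_pairs_lt_containing_eq_prod_erase i₀, ← prod_filter_mul_prod_filter_not
    (univ.filter (fun p : ι × ι => p.1 < p.2)) (fun p => p.1 = i₀ ∨ p.2 = i₀), filter_filter]
  have hfar : ∀ p ∈ univ.filter (fun p : ι × ι => p.1 < p.2 ∧ ¬(p.1 = i₀ ∨ p.2 = i₀)),
      x' p.1 - x' p.2 = x p.1 - x p.2 := by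
    intro p hp
    simp only [mem_filter, mem_univ, true_and, not_or] at hp
    simp [x', Function.update_of_ne hp.2.1, Function.update_of_ne hp.2.2]
  have hnear : ∀ p ∈ univ.filter (fun p : ι × ι => p.1 < p.2 ∧ (p.1 = i₀ ∨ p.2 = i₀)),
      (x' p.1 - x' p.2) * (x i₀ - x (if p.1 = i₀ then p.2 else p.1)) =
        (x p.1 - x p.2) * (y - x (if p.1 = i₀ then p.2 else p.1)) := by
    intro p hp
    simp only [mem_filter, mem_univ, true_and] at hp
    obtain ⟨hlt, rfl | rfl⟩ := hp
    · rw [if_pos rfl]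
      simp only [x', Function.update_self, Function.update_of_ne hlt.ne']
      ring
    · rw [if_neg hlt.ne]
      simp only [x', Function.update_self, Function.update_of_ne hlt.ne]
      ring
  rw [prod_congr rfl hfar, mul_right_comm, ← prod_mul_distrib, prod_congr rfl hnear,
    prod_mul_distrib]
  ring

end PairProducts

section FrobeniusQuotient

variable {ι : Type*} [Fintype ι] [LinearOrder ι]

noncomputable def frobeniusQuotient (x : ι → ℕ) : ℝ :=
  (∏ p ∈ univ.filter (fun p : ι × ι => p.1 < p.2), ((x p.1 : ℝ) - x p.2)) /
    ∏ i, ((x i).factorial : ℝ)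

noncomputable def cornerWeight (x : ι → ℕ) (i : ι) : ℝ :=
  x i * (∏ j ∈ univ.erase i, ((x i : ℝ) - 1 - x j)) / ∏ j ∈ univ.erase i, ((x i : ℝ) - x j)

lemma prod_factorial_update_sub_one_mul (x : ι → ℕ) {i : ι} (hi : 0 < x i) :
    (∏ j, ((Function.update x i (x i - 1) j).factorial : ℝ)) * x i =
      ∏ j, ((x j).factorial : ℝ) := by
  simp only [Function.apply_update (fun _ n => ((Nat.factorial n : ℕ) : ℝ)),
    prod_update_of_mem (mem_univ i), ← mul_prod_erase univ (fun j => ((x j).factorial : ℝ))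
      (mem_univ i), sdiff_singleton_eq_erase]
  rw [mul_right_comm, ← Nat.cast_mul, mul_comm _ (x i), Nat.mul_factorial_pred hi.ne']

lemma frobeniusQuotient_update_sub_one {x : ι → ℕ} (hx : Function.Injective x) {i : ι}
    (hi : 0 < x i) :
    frobeniusQuotient (Function.update x i (x i - 1)) = cornerWeight x i * frobeniusQuotient x := by
  have hcast : (fun j => ((Function.update x i (x i - 1) j : ℕ) : ℝ)) =
      Function.update (fun j => (x j : ℝ)) i (x i - 1) := by
    funext j
    rw [Function.apply_update (fun _ (n : ℕ) => (n : ℝ)), Nat.cast_sub hi, Nat.cast_one]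
  have hvdm := prod_pairs_lt_sub_update_mul (fun j => (x j : ℝ)) i (x i - 1)
  simp only [← hcast] at hvdm
  have hsep : ∏ j ∈ univ.erase i, ((x i : ℝ) - x j) ≠ 0 :=
    prod_ne_zero_iff.mpr fun j hj =>
      sub_ne_zero.mpr (Nat.cast_injective.ne (hx.ne (ne_of_mem_erase hj).symm))
  unfold frobeniusQuotient cornerWeight
  rw [← prod_factorial_update_sub_one_mul x hi]
  field_simp
  linear_combination hvdm

lemma cornerWeight_eq_zero (x : ι → ℕ) {i : ι} (h : x i = 0 ∨ ∃ j, x j + 1 = x i) :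
    cornerWeight x i = 0 := by
  refine div_eq_zero_iff.mpr (.inl ?_)
  obtain h | ⟨j, hj⟩ := h
  · simp [h]
  · have hji : j ≠ i := by rintro rfl; omega
    refine mul_eq_zero_of_right _ (prod_eq_zero (mem_erase.mpr ⟨hji, mem_univ j⟩) ?_)
    rw [← hj]
    push_cast
    ring

lemma sum_cornerWeight {x : ι → ℕ} (hx : Function.Injective x) :
    ∑ i, cornerWeight x i = ∑ i, (x i : ℝ) - ((Fintype.card ι).choose 2 : ℝ) :=
  sum_mul_prod_sub_one_div_prod_sub univ (fun i => (x i : ℝ))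
    (Nat.cast_injective.comp hx).injOn

end FrobeniusQuotient

section Partitions

variable {N : ℕ}

-- Rows are indexed from `0`, so this is the paper's `λ_i + N - i`.
def shiftedParts (lam : Fin N → ℕ) (i : Fin N) : ℕ := lam i + (N - 1 - i)

def CornerAt (lam : Fin N → ℕ) (i : Fin N) : Prop := 0 < lam i ∧ ∀ j, i < j → lam j < lam i

def removeCell (lam : Fin N → ℕ) (i : Fin N) : Fin N → ℕ := Function.update lam i (lam i - 1)

lemma cast_shiftedParts_sub (lam : Fin N → ℕ) (i j : Fin N) :
    (shiftedParts lam i : ℝ) - shiftedParts lam j = lam i - lam j + (j : ℕ) - (i : ℕ) := by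
  have hcast (k : Fin N) : ((N - 1 - k : ℕ) : ℝ) = N - 1 - k := by
    have := k.isLt
    rw [Nat.cast_sub (by omega), Nat.cast_sub (by omega), Nat.cast_one]
  simp only [shiftedParts, Nat.cast_add, hcast]
  ring

lemma shiftedParts_strictAnti {lam : Fin N → ℕ} (hmono : Antitone lam) :
    StrictAnti (shiftedParts lam) := by
  intro i j hij
  have := hmono hij.le
  have : (i : ℕ) < j := hij
  have := j.isLt
  simp only [shiftedParts]
  omega

lemma shiftedParts_removeCell {lam : Fin N → ℕ} {i : Fin N} (hi : 0 < lam i) :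
    shiftedParts (removeCell lam i) =
      Function.update (shiftedParts lam) i (shiftedParts lam i - 1) := by
  funext j
  rcases eq_or_ne j i with rfl | hj
  · simp only [shiftedParts, removeCell, Function.update_self]
    omega
  · simp only [shiftedParts, removeCell, Function.update_of_ne hj]

lemma sum_shiftedParts (lam : Fin N → ℕ) :
    ∑ i, shiftedParts lam i = ∑ i, lam i + N.choose 2 := by
  simp only [shiftedParts]
  have hreflect : ∑ i ∈ range N, (N - 1 - i) = ∑ i ∈ range N, i := sum_range_reflect (fun i => i) N
  rw [sum_add_distrib, Fin.sum_univ_eq_sum_range (fun i => N - 1 - i), hreflect, sum_range_id,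
    Nat.choose_two_right]

lemma shiftedParts_eq_zero_or_of_not_cornerAt {lam : Fin N → ℕ} (hmono : Antitone lam)
    {i : Fin N} (hi : ¬ CornerAt lam i) :
    shiftedParts lam i = 0 ∨ ∃ j, shiftedParts lam j + 1 = shiftedParts lam i := by
  simp only [CornerAt, not_and, not_forall, not_lt, exists_prop] at hi
  by_cases hlast : (i : ℕ) + 1 < N
  · obtain ⟨i', hi'⟩ : ∃ i' : Fin N, (i' : ℕ) = i + 1 := ⟨⟨i + 1, hlast⟩, rfl⟩
    have hii' : i < i' := Fin.lt_def.mpr (by omega)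
    have hnext : lam i ≤ lam i' := by
      rcases (lam i).eq_zero_or_pos with h0 | hpos
      · omega
      · obtain ⟨j, hij, hle⟩ := hi hpos
        exact hle.trans (hmono (Fin.le_def.mpr (by rw [hi']; exact hij)))
    have := hmono hii'.le
    right
    exact ⟨i', by simp only [shiftedParts]; omega⟩
  · have h0 : lam i = 0 := by
      by_contra h
      obtain ⟨j, hij, -⟩ := hi (Nat.pos_of_ne_zero h)
      have : (i : ℕ) < j := hij
      omega
    left
    simp only [shiftedParts]
    omega

lemma CornerAt.antitone_removeCell {lam : Fin N → ℕ} {i : Fin N} (hmono : Antitone lam)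
    (hc : CornerAt lam i) :
    Antitone (removeCell lam i) := by
  intro a b hab
  have := hmono hab
  rcases eq_or_ne a i with rfl | ha
  · rcases eq_or_ne b a with rfl | hb
    · exact le_rfl
    · have := hc.2 b (lt_of_le_of_ne hab hb.symm)
      simp only [removeCell, Function.update_self, Function.update_of_ne hb]
      omega
  · rcases eq_or_ne b i with rfl | hb
    · simp only [removeCell, Function.update_self, Function.update_of_ne ha]
      omega
    · simpa only [removeCell, Function.update_of_ne ha, Function.update_of_ne hb]

lemma frobeniusQuotient_shiftedParts_zero :
    frobeniusQuotient (shiftedParts (0 : Fin N → ℕ)) = 1 := by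
  have hrow : ∀ i : Fin N, ∏ j ∈ Ioi i, ((j : ℕ) - i) = (N - 1 - i).factorial := by
    intro i
    rw [← prod_range_add_one_eq_factorial]
    refine (prod_map (Ioi i) Fin.valEmbedding (fun m => m - i)).symm.trans ?_
    rw [Fin.map_valEmbedding_Ioi, ← Finset.Ico_add_one_left_eq_Ioo, prod_Ico_eq_prod_range]
    exact prod_congr (by congr 1; omega) fun k _ => by omega
  have hsub : ∀ i j : Fin N, i < j →
      ((shiftedParts 0 i : ℕ) : ℝ) - shiftedParts 0 j = (((j : ℕ) - i : ℕ) : ℝ) := by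
    intro i j hij
    have : (i : ℕ) < j := hij
    have := j.isLt
    rw [sub_eq_iff_eq_add, ← Nat.cast_add]
    simp only [shiftedParts, Pi.zero_apply, zero_add]
    congr 1
    omega
  unfold frobeniusQuotient
  rw [div_eq_one_iff_eq (prod_ne_zero_iff.mpr fun i _ => by positivity),
    prod_finset_product _ univ (fun i => Ioi i) (by simp)]
  refine prod_congr rfl fun i _ => ?_
  rw [prod_congr rfl fun j hj => hsub i j (mem_Ioi.mp hj), ← Nat.cast_prod, hrow]
  simp [shiftedParts]

end Partitions

section Tableaux

variable {N : ℕ}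

def cells (lam : Fin N → ℕ) : Set (Fin N × ℕ) := {p | p.2 < lam p.1}

def IsLeftOrAbove (p q : Fin N × ℕ) : Prop :=
  (p.1 = q.1 ∧ p.2 < q.2) ∨ (p.1 < q.1 ∧ p.2 = q.2)

structure IsStandardTableau (lam : Fin N → ℕ) (T : Fin N × ℕ → ℕ) : Prop where
  eq_zero_of_notMem : ∀ p ∉ cells lam, T p = 0
  bijOn : Set.BijOn T (cells lam) (Set.Icc 1 (∑ i, lam i))
  lt_of_isLeftOrAbove : ∀ p q, IsLeftOrAbove p q → q ∈ cells lam → T p < T q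

lemma sytCount_eq_card (lam : Fin N → ℕ) :
    sytCount N lam = Nat.card {T // IsStandardTableau lam T} := by
  refine Nat.card_congr (Equiv.subtypeEquivRight fun T => ⟨?_, ?_⟩)
  · rintro ⟨hzero, hbij, hrow, hcol⟩
    refine ⟨hzero, hbij, ?_⟩
    rintro ⟨i, j⟩ ⟨i', j'⟩ (⟨rfl, hj⟩ | ⟨hi, rfl⟩) hq
    · exact hrow i j j' hj hq
    · exact hcol i i' j hi hq
  · rintro ⟨hzero, hbij, hlt⟩
    exact ⟨hzero, hbij, fun i j j' hj hq => hlt (i, j) (i, j') (.inl ⟨rfl, hj⟩) hq,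
      fun i i' j hi hq => hlt (i, j) (i', j) (.inr ⟨hi, rfl⟩) hq⟩

namespace IsStandardTableau

variable {lam : Fin N → ℕ} {T : Fin N × ℕ → ℕ}

lemma le_sum (hT : IsStandardTableau lam T) (p : Fin N × ℕ) : T p ≤ ∑ i, lam i := by
  by_cases hp : p ∈ cells lam
  · exact (hT.bijOn.mapsTo hp).2
  · rw [hT.eq_zero_of_notMem p hp]
    exact Nat.zero_le _

lemma mem_cells_of_pos (hT : IsStandardTableau lam T) {p : Fin N × ℕ} (hp : 0 < T p) :
    p ∈ cells lam := by
  by_contra h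
  rw [hT.eq_zero_of_notMem p h] at hp
  exact lt_irrefl 0 hp

end IsStandardTableau

lemma finite_isStandardTableau (lam : Fin N → ℕ) : Finite {T // IsStandardTableau lam T} := by
  set n := ∑ i, lam i
  refine Finite.of_injective (β := Fin N → Fin (n + 1) → Fin (n + 1))
    (fun T i j => ⟨T.1 (i, j), Nat.lt_succ_of_le (T.2.le_sum _)⟩) ?_
  rintro ⟨T, hT⟩ ⟨T', hT'⟩ h
  ext ⟨i, j⟩
  by_cases hp : (i, j) ∈ cells lam
  · have hj : j < n + 1 := Nat.lt_succ_of_le ((le_of_lt hp).trans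
      (single_le_sum (fun i _ => Nat.zero_le (lam i)) (mem_univ i)))
    simpa using congrFun (congrFun h i) ⟨j, hj⟩
  · exact (hT.eq_zero_of_notMem _ hp).trans (hT'.eq_zero_of_notMem _ hp).symm

variable {lam : Fin N → ℕ} {i : Fin N}

lemma card_isStandardTableau_zero : Nat.card {T // IsStandardTableau (0 : Fin N → ℕ) T} = 1 := by
  have hcells : cells (0 : Fin N → ℕ) = ∅ := by simp [cells]
  refine Nat.card_eq_one_iff_exists.mpr ⟨⟨0, fun _ _ => rfl, ?_, ?_⟩, ?_⟩
  · simp [hcells]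
  · simp [hcells]
  · exact fun T => Subtype.ext (funext fun p => T.2.eq_zero_of_notMem p (by simp [hcells]))

lemma cells_removeCell (hi : 0 < lam i) :
    cells (removeCell lam i) = cells lam \ {(i, lam i - 1)} := by
  ext ⟨j, k⟩
  rcases eq_or_ne j i with rfl | hj
  · simp only [cells, removeCell, Function.update_self, Set.mem_sdiff, Set.mem_ofPred_eq,
      Set.mem_singleton_iff, Prod.mk.injEq, true_and]
    omega
  · simp [cells, removeCell, hj]

lemma sum_removeCell_add_one (hi : 0 < lam i) : ∑ j, removeCell lam i j + 1 = ∑ j, lam j := by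
  rw [removeCell, sum_update_of_mem (mem_univ i), sdiff_singleton_eq_erase,
    ← add_sum_erase univ lam (mem_univ i)]
  omega

lemma CornerAt.notMem_cells (hc : CornerAt lam i) {q : Fin N × ℕ}
    (hq : IsLeftOrAbove (i, lam i - 1) q) : q ∉ cells lam := by
  rcases q with ⟨i', k⟩
  simp only [IsLeftOrAbove] at hq
  simp only [cells, Set.mem_ofPred_eq]
  rcases hq with ⟨rfl, hk⟩ | ⟨hi', rfl⟩
  · omega
  · have := hc.2 i' hi'
    omega

namespace IsStandardTableau

variable {T : Fin N × ℕ → ℕ}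

lemma cornerAt_of_eq_sum (hT : IsStandardTableau lam T) {p : Fin N × ℕ} (hp : p ∈ cells lam)
    (hTp : T p = ∑ j, lam j) : CornerAt lam p.1 ∧ p.2 = lam p.1 - 1 := by
  have hlast : ∀ q, IsLeftOrAbove p q → q ∉ cells lam := fun q hpq hq =>
    (hT.lt_of_isLeftOrAbove p q hpq hq).not_ge (hTp ▸ hT.le_sum q)
  obtain ⟨i, k⟩ := p
  simp only [cells, Set.mem_ofPred_eq] at hp ⊢
  refine ⟨⟨by omega, fun j hij => ?_⟩, ?_⟩
  · by_contra! hle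
    exact hlast (j, k) (.inr ⟨hij, rfl⟩) (show k < lam j by omega)
  · by_contra hne
    exact hlast (i, k + 1) (.inl ⟨rfl, Nat.lt_succ_self k⟩) (show k + 1 < lam i by omega)

lemma removeCorner (hT : IsStandardTableau lam T) (hc : CornerAt lam i)
    (hTc : T (i, lam i - 1) = ∑ j, lam j) :
    IsStandardTableau (removeCell lam i) (Function.update T (i, lam i - 1) 0) where
  eq_zero_of_notMem p hp := by
    rcases eq_or_ne p (i, lam i - 1) with rfl | hpc
    · exact Function.update_self _ _ _
    · rw [cells_removeCell hc.1] at hp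
      rw [Function.update_of_ne hpc]
      exact hT.eq_zero_of_notMem p fun h => hp ⟨h, hpc⟩
  bijOn := by
    have hcell : (i, lam i - 1) ∈ cells lam := by simp [cells, hc.1]
    have hbij := (hT.bijOn.sdiff_singleton hcell).congr (f₂ := Function.update T (i, lam i - 1) 0)
      fun p hp => (Function.update_of_ne hp.2 _ _).symm
    rwa [hTc, Set.Icc_sdiff_right, ← sum_removeCell_add_one hc.1, Set.Ico_add_one_right_eq_Icc,
      ← cells_removeCell hc.1] at hbij
  lt_of_isLeftOrAbove p q hpq hq := by
    rw [cells_removeCell hc.1] at hq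
    have hpc : p ≠ (i, lam i - 1) := by
      rintro rfl
      exact hc.notMem_cells hpq hq.1
    rw [Function.update_of_ne hpc, Function.update_of_ne hq.2]
    exact hT.lt_of_isLeftOrAbove p q hpq hq.1

lemma addCorner (hT : IsStandardTableau (removeCell lam i) T) (hc : CornerAt lam i) :
    IsStandardTableau lam (Function.update T (i, lam i - 1) (∑ j, lam j)) where
  eq_zero_of_notMem p hp := by
    have hpc : p ≠ (i, lam i - 1) := by
      rintro rfl
      exact hp (by simp [cells, hc.1])
    rw [Function.update_of_ne hpc]
    exact hT.eq_zero_of_notMem p fun h => hp (cells_removeCell hc.1 ▸ h).1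
  bijOn := by
    have hcell : (i, lam i - 1) ∉ cells (removeCell lam i) := by simp [cells_removeCell hc.1]
    have hcells : cells lam = insert (i, lam i - 1) (cells (removeCell lam i)) := by
      rw [cells_removeCell hc.1, Set.insert_sdiff_singleton, Set.insert_eq_of_mem]
      simp [cells, hc.1]
    have hbij := (hT.bijOn.congr (f₂ := Function.update T (i, lam i - 1) (∑ j, lam j))
      fun p hp => (Function.update_of_ne (ne_of_mem_of_not_mem hp hcell) _ _).symm).insert
        (a := (i, lam i - 1)) (by simp [← sum_removeCell_add_one hc.1])
    have hIcc : insert (∑ j, lam j) (Set.Icc 1 (∑ j, removeCell lam i j)) =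
        Set.Icc 1 (∑ j, lam j) := by
      rw [← sum_removeCell_add_one hc.1]
      exact Set.insert_Icc_right_eq_Icc_add_one (by omega)
    rwa [Function.update_self, hIcc, ← hcells] at hbij
  lt_of_isLeftOrAbove p q hpq hq := by
    have hpc : p ≠ (i, lam i - 1) := by
      rintro rfl
      exact hc.notMem_cells hpq hq
    rw [Function.update_of_ne hpc]
    rcases eq_or_ne q (i, lam i - 1) with rfl | hqc
    · rw [Function.update_self, ← sum_removeCell_add_one hc.1]
      exact Nat.lt_succ_of_le (hT.le_sum p)
    · rw [Function.update_of_ne hqc]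
      exact hT.lt_of_isLeftOrAbove p q hpq (by rw [cells_removeCell hc.1]; exact ⟨hq, hqc⟩)

end IsStandardTableau

end Tableaux

section Counting

variable {N : ℕ} {lam : Fin N → ℕ} {i : Fin N}

lemma card_isStandardTableau_eq_sum (hpos : 0 < ∑ j, lam j) :
    Nat.card {T // IsStandardTableau lam T} =
      ∑ i, Nat.card {T // IsStandardTableau lam T ∧ T (i, lam i - 1) = ∑ j, lam j} := by
  have (i : Fin N) : Finite {T // IsStandardTableau lam T ∧ T (i, lam i - 1) = ∑ j, lam j} :=
    have := finite_isStandardTableau lam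
    Finite.of_injective (fun T => (⟨T.1, T.2.1⟩ : {T // IsStandardTableau lam T}))
      fun _ _ h => Subtype.ext (congrArg (fun T : {T // IsStandardTableau lam T} => T.1) h)
  rw [← Nat.card_sigma]
  refine (Nat.card_congr (Equiv.ofBijective (fun x => ⟨x.2.1, x.2.2.1⟩) ⟨?_, ?_⟩)).symm
  · rintro ⟨i, T, hT, hTi⟩ ⟨j, T', hT', hTj⟩ h
    obtain rfl : T = T' := congrArg (fun T : {T // IsStandardTableau lam T} => T.1) h
    obtain rfl : i = j := congrArg Prod.fst <| hT.bijOn.injOn (hT.mem_cells_of_pos (hTi ▸ hpos))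
      (hT.mem_cells_of_pos (hTj ▸ hpos)) (hTi.trans hTj.symm)
    rfl
  · rintro ⟨T, hT⟩
    obtain ⟨p, hp, hTp⟩ := hT.bijOn.surjOn (Set.mem_Icc.mpr ⟨hpos, le_rfl⟩)
    obtain ⟨-, hp2⟩ := hT.cornerAt_of_eq_sum hp hTp
    exact ⟨⟨p.1, T, hT, by rw [← hp2]; exact hTp⟩, rfl⟩

lemma CornerAt.card_fiber_eq (hc : CornerAt lam i) :
    Nat.card {T // IsStandardTableau lam T ∧ T (i, lam i - 1) = ∑ j, lam j} =
      Nat.card {T // IsStandardTableau (removeCell lam i) T} :=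
  Nat.card_congr
    { toFun := fun T => ⟨Function.update T.1 (i, lam i - 1) 0, T.2.1.removeCorner hc T.2.2⟩
      invFun := fun T => ⟨Function.update T.1 (i, lam i - 1) (∑ j, lam j), T.2.addCorner hc,
        Function.update_self _ _ _⟩
      left_inv := fun T => by
        ext1
        simp only [Function.update_idem, ← T.2.2, Function.update_eq_self]
      right_inv := fun T => by
        ext1
        have : T.1 (i, lam i - 1) = 0 :=
          T.2.eq_zero_of_notMem _ (by simp [cells_removeCell hc.1])
        simp only [Function.update_idem, ← this, Function.update_eq_self] }

lemma card_fiber_eq_zero (hc : ¬ CornerAt lam i) (hpos : 0 < ∑ j, lam j) :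
    Nat.card {T // IsStandardTableau lam T ∧ T (i, lam i - 1) = ∑ j, lam j} = 0 := by
  have : IsEmpty {T // IsStandardTableau lam T ∧ T (i, lam i - 1) = ∑ j, lam j} :=
    ⟨fun ⟨T, hT, hTc⟩ => hc (hT.cornerAt_of_eq_sum (hT.mem_cells_of_pos (hTc ▸ hpos)) hTc).1⟩
  exact Nat.card_of_isEmpty

end Counting

theorem card_isStandardTableau {N : ℕ} {lam : Fin N → ℕ} (hmono : Antitone lam) :
    (Nat.card {T // IsStandardTableau lam T} : ℝ) =
      (∑ i, lam i).factorial * frobeniusQuotient (shiftedParts lam) := by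
  induction hsum : ∑ i, lam i generalizing lam with
  | zero =>
    obtain rfl : lam = 0 := funext fun i => sum_eq_zero_iff.mp hsum i (mem_univ i)
    simp [card_isStandardTableau_zero, frobeniusQuotient_shiftedParts_zero]
  | succ n ih =>
    have hx := (shiftedParts_strictAnti hmono).injective
    have hfiber (i : Fin N) :
        (Nat.card {T // IsStandardTableau lam T ∧ T (i, lam i - 1) = ∑ j, lam j} : ℝ) =
          n.factorial *
            (cornerWeight (shiftedParts lam) i * frobeniusQuotient (shiftedParts lam)) := by
      by_cases hc : CornerAt lam i
      · have hsum' : ∑ j, removeCell lam i j = n := by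
          have := sum_removeCell_add_one hc.1
          omega
        rw [hc.card_fiber_eq, ih (hc.antitone_removeCell hmono) hsum',
          shiftedParts_removeCell hc.1, frobeniusQuotient_update_sub_one hx]
        exact Nat.add_pos_left hc.1 _
      · rw [card_fiber_eq_zero hc (by omega),
          cornerWeight_eq_zero _ (shiftedParts_eq_zero_or_of_not_cornerAt hmono hc)]
        simp
    have hxsum : ∑ i, (shiftedParts lam i : ℝ) = (n + 1 : ℕ) + (N.choose 2 : ℕ) := by
      rw [← Nat.cast_sum, sum_shiftedParts, hsum, Nat.cast_add]
    rw [card_isStandardTableau_eq_sum (by omega), Nat.cast_sum, sum_congr rfl fun i _ => hfiber i,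
      ← mul_sum, ← sum_mul, sum_cornerWeight hx, hxsum, Fintype.card_fin, Nat.factorial_succ]
    push_cast
    ring

/-- dimension formula: `dim λ / |λ|! = ∏_{i<j≤N}(λ_i-λ_j+j-i) / ∏_{i=1}^N (λ_i+N-i)!`. -/
theorem stmt4 (N : ℕ) (lam : Fin N → ℕ) (hmono : Antitone lam) :
    (sytCount N lam : ℝ) / ((∑ i, lam i).factorial : ℝ) =
      (∏ p ∈ Finset.univ.filter (fun p : Fin N × Fin N => p.1 < p.2),
          ((lam p.1 : ℝ) - (lam p.2 : ℝ) + ((p.2 : ℕ) : ℝ) - ((p.1 : ℕ) : ℝ))) /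
        ∏ i : Fin N, ((lam i + (N - 1 - (i : ℕ))).factorial : ℝ) := by
  rw [sytCount_eq_card, card_isStandardTableau hmono, mul_div_cancel_left₀ _ (by positivity),
    frobeniusQuotient]
  exact congrArg (· / _) (prod_congr rfl fun p _ => cast_shiftedParts_sub lam p.1 p.2)
end

section
/- Let θ(e^z) = (e^{z/2}-e^{-z/2})∏_{i≥1}(1-q^i e^z)(1-q^i e^{-z})/(1-q^i)². Then as formal power series in z, log(z/θ(e^z)) = 2∑_{k≥1} E_{2k}(q) z^{2k}/(2k)!, where E_{2k}(q) = ζ(1-2k)/2 + ∑_{n≥1} (∑_{d|n} d^{2k-1}) q^n. -/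
/-- The real odd theta function `θ(e^z)` for `0 < q < 1`. -/
noncomputable def thetaR (q z : ℝ) : ℝ :=
  (Real.exp (z / 2) - Real.exp (-z / 2)) *
    ∏' i : ℕ, ((1 - q ^ (i + 1) * Real.exp z) * (1 - q ^ (i + 1) * Real.exp (-z)) /
      (1 - q ^ (i + 1)) ^ 2)

/-- The Eisenstein series `E_{2k}(q) = ζ(1-2k)/2 + ∑_{n≥1} σ_{2k-1}(n) q^n`,
using `ζ(1-2k) = -B_{2k}/(2k)`. -/
noncomputable def Eis (k : ℕ) (q : ℝ) : ℝ :=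
  (-(bernoulli (2 * k) : ℝ) / (2 * k)) / 2 +
    ∑' n : ℕ, (∑ d ∈ (n + 1).divisors, (d : ℝ) ^ (2 * k - 1)) * q ^ (n + 1)

/-!
Both parts of `log (z / θ(e^z))` are expanded through the series of `log (1 + x)`.

Euler's product `sinh (π u) / (π u) = ∏ (1 + u² / j²)` with `u = z / 2π` gives
`log (sinh (z/2) / (z/2)) = ∑_m (-1)^m / (m+1) · u^{2(m+1)} ζ(2(m+1))`, and Euler's evaluation of
`ζ(2k)` turns this into `∑_k B_{2k} / (2k) · z^{2k} / (2k)!`: these are the constant terms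
`ζ(1-2k) / 2 = -B_{2k} / (4k)` of the `E_{2k}`.

A factor of the product with `a = q^i` contributes
`-log ((1 - a e^z)(1 - a e^{-z}) / (1 - a)²) = ∑_m a^{m+1} / (m+1) · 2 (cosh ((m+1) z) - 1)`.
Expanding `cosh` gives a triple series of nonnegative terms; summed over `(i, m)` for a fixed
power `z^{2k}` it is the Lambert series `∑_{i,m} m^{2k-1} q^{im} = ∑_n σ_{2k-1}(n) q^n`.
-/

open Real Finset Filter Topology
open scoped Nat

lemma pow_succ_le_mul_pow {x c : ℝ} (hx : 0 ≤ x) (hxc : x ≤ c) (m : ℕ) :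
    x ^ (m + 1) ≤ x * c ^ m := by
  rw [pow_succ']
  exact mul_le_mul_of_nonneg_left (pow_le_pow_left₀ hx hxc m) hx

lemma hasSum_log_one_add_pow_div {x : ℝ} (h : |x| < 1) :
    HasSum (fun m : ℕ => (-1) ^ m / (m + 1) * x ^ (m + 1)) (log (1 + x)) := by
  have h' := (Real.hasSum_pow_div_log_of_abs_lt_one (x := -x) (by rwa [abs_neg])).neg
  rw [sub_neg_eq_add, neg_neg] at h'
  refine h'.congr_fun fun m => ?_
  rw [neg_pow x]
  ring

lemma hasSum_tsum_log_one_add {x : ℕ → ℝ} {c : ℝ} (hx0 : ∀ j, 0 ≤ x j) (hxc : ∀ j, x j ≤ c)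
    (hc : c < 1) (hx : Summable x) :
    HasSum (fun m : ℕ => (-1) ^ m / (m + 1) * ∑' j, x j ^ (m + 1)) (∑' j, log (1 + x j)) := by
  set Ψ : ℕ × ℕ → ℝ := fun p => (-1) ^ p.2 / (p.2 + 1) * x p.1 ^ (p.2 + 1)
  have hc0 : 0 ≤ c := (hx0 0).trans (hxc 0)
  have hΨ : Summable Ψ := by
    refine Summable.of_norm_bounded (g := fun p : ℕ × ℕ => x p.1 * c ^ p.2)
      (hx.mul_of_nonneg (summable_geometric_of_lt_one hc0 hc) hx0 fun m => by positivity)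
      fun p => ?_
    have hp : (1 : ℝ) ≤ p.2 + 1 := by simp
    calc ‖Ψ p‖ = x p.1 ^ (p.2 + 1) / (p.2 + 1) := by
          simp [Ψ, abs_of_nonneg (hx0 p.1), abs_of_nonneg (by positivity : (0 : ℝ) ≤ p.2 + 1)]
          ring
      _ ≤ x p.1 ^ (p.2 + 1) := div_le_self (pow_nonneg (hx0 _) _) hp
      _ ≤ x p.1 * c ^ p.2 := pow_succ_le_mul_pow (hx0 _) (hxc _) _
  have hrows : HasSum (fun j => log (1 + x j)) (∑' p, Ψ p) :=
    hΨ.hasSum.prod_fiberwise fun j =>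
      hasSum_log_one_add_pow_div (by rw [abs_of_nonneg (hx0 j)]; linarith [hxc j])
  have hcols : ∀ m : ℕ, HasSum (fun j => Ψ (j, m)) ((-1) ^ m / (m + 1) * ∑' j, x j ^ (m + 1)) :=
    fun m => (Summable.of_nonneg_of_le (fun j => pow_nonneg (hx0 j) _)
      (fun j => pow_succ_le_mul_pow (hx0 j) (hxc j) m) (hx.mul_right _)).hasSum.mul_left _
  rw [hrows.tsum_eq]
  exact ((Equiv.prodComm ℕ ℕ).hasSum_iff.2 hΨ.hasSum).prod_fiberwise hcols

lemma hasSum_cosh_sub_one (w : ℝ) :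
    HasSum (fun k : ℕ => w ^ (2 * (k + 1)) / (2 * (k + 1))!) (cosh w - 1) := by
  simpa using (hasSum_nat_add_iff' 1).2 (Real.hasSum_cosh w)

lemma cosh_le_exp_abs (x : ℝ) : cosh x ≤ exp |x| := by
  rw [← cosh_abs, cosh_eq]
  linarith [exp_le_exp.2 (neg_le_self (abs_nonneg x))]

lemma hasSum_lambert (e : ℕ) {q : ℝ} (hq : |q| < 1) :
    HasSum (fun p : ℕ × ℕ => ((p.2 : ℝ) + 1) ^ e * q ^ ((p.1 + 1) * (p.2 + 1)))
      (∑' n : ℕ, (∑ d ∈ (n + 1).divisors, (d : ℝ) ^ e) * q ^ (n + 1)) := by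
  have hq' : ‖q‖ < 1 := by simpa using hq
  let shift : ℕ × ℕ ≃ ℕ+ × ℕ+ := Equiv.pnatEquivNat.symm.prodCongr Equiv.pnatEquivNat.symm
  have h := shift.hasSum_iff.2 (summable_prod_mul_pow e hq').hasSum
  rw [(summable_prod_mul_pow e hq').tsum_prod, tsum_prod_pow_eq_tsum_sigma e hq',
    tsum_pnat_eq_tsum_succ (f := fun n => (ArithmeticFunction.sigma e n : ℝ) * q ^ n)] at h
  simp only [ArithmeticFunction.sigma_apply, Nat.cast_sum, Nat.cast_pow] at h
  exact h.congr_fun fun p => by simp [shift]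

lemma summable_sq_div_succ_sq (u : ℝ) : Summable fun j : ℕ => u ^ 2 / ((j : ℝ) + 1) ^ 2 := by
  have h := (summable_pow_div_add (u ^ 2) 2 1 Nat.one_lt_two).of_norm
  exact_mod_cast h

lemma tendsto_prod_one_add_sq_div_sq {u : ℝ} (hu : u ≠ 0) :
    Tendsto (fun n => ∏ j ∈ range n, (1 + u ^ 2 / ((j : ℝ) + 1) ^ 2)) atTop
      (𝓝 (sinh (π * u) / (π * u))) := by
  have h := (Complex.continuous_re.tendsto _).comp
    (tendsto_euler_sin_prod' (x := u * Complex.I) (by simpa using hu))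
  have hterm : ∀ j : ℕ,
      1 + sineTerm (u * Complex.I) j = ((1 + u ^ 2 / ((j : ℝ) + 1) ^ 2 : ℝ) : ℂ) := by
    intro j
    simp only [sineTerm, mul_pow, Complex.I_sq]
    push_cast
    ring
  have hlim : Complex.sin (π * (u * Complex.I)) / (π * (u * Complex.I)) =
      ((sinh (π * u) / (π * u) : ℝ) : ℂ) := by
    rw [← mul_assoc, Complex.sin_mul_I]
    push_cast
    field_simp
  simp only [hterm, hlim, ← Complex.ofReal_prod, Function.comp_def, Complex.ofReal_re] at h
  exact h

lemma hasSum_log_one_add_sq_div_sq {u : ℝ} (hu : u ≠ 0) :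
    HasSum (fun j : ℕ => log (1 + u ^ 2 / ((j : ℝ) + 1) ^ 2)) (log (sinh (π * u) / (π * u))) := by
  obtain ⟨S, hS⟩ := Real.summable_log_one_add_of_summable (summable_sq_div_succ_sq u)
  have hprod := (Real.hasProd_of_hasSum_log (fun j => by positivity) hS).tendsto_prod_nat
  rwa [← tendsto_nhds_unique hprod (tendsto_prod_one_add_sq_div_sq hu), log_exp]

-- `u^{2(m+1)} ζ(2(m+1))`, with Euler's value of `ζ(2(m+1))`
lemma hasSum_sq_div_succ_sq_pow (u : ℝ) (m : ℕ) :
    HasSum (fun j : ℕ => (u ^ 2 / ((j : ℝ) + 1) ^ 2) ^ (m + 1))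
      (u ^ (2 * (m + 1)) * ((-1) ^ (m + 2) * 2 ^ (2 * m + 1) * π ^ (2 * (m + 1)) *
        bernoulli (2 * (m + 1)) / (2 * (m + 1))!)) := by
  have h := (hasSum_nat_add_iff' 1).2 (hasSum_zeta_nat (k := m + 1) m.succ_ne_zero)
  rw [sum_range_one, Nat.cast_zero, zero_pow (by omega), div_zero, sub_zero,
    show 2 * (m + 1) - 1 = 2 * m + 1 by omega] at h
  refine (h.mul_left (u ^ (2 * (m + 1)))).congr_fun fun j => ?_
  rw [div_pow, ← pow_mul, ← pow_mul]
  push_cast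
  ring

lemma hasSum_log_sinh_div {z : ℝ} (hz : z ≠ 0) (h : |z| < 2 * π) :
    HasSum (fun k : ℕ => (bernoulli (2 * (k + 1)) : ℝ) / (2 * (k + 1)) * z ^ (2 * (k + 1)) /
      (2 * (k + 1))!) (log (sinh (z / 2) / (z / 2))) := by
  set u := z / (2 * π) with hu_def
  have hzu : z = 2 * π * u := by rw [hu_def]; field_simp
  have hu : u ≠ 0 := div_ne_zero hz (by positivity)
  have hu1 : u ^ 2 < 1 := by
    rw [sq_lt_one_iff_abs_lt_one, hu_def, abs_div, abs_of_pos (by positivity : 0 < 2 * π)]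
    exact (div_lt_one (by positivity)).2 h
  have hx := hasSum_tsum_log_one_add (x := fun j : ℕ => u ^ 2 / ((j : ℝ) + 1) ^ 2)
    (fun j => by positivity)
    (fun j => div_le_self (sq_nonneg u) (one_le_pow₀ (le_add_of_nonneg_left j.cast_nonneg))) hu1
    (summable_sq_div_succ_sq u)
  rw [(hasSum_log_one_add_sq_div_sq hu).tsum_eq, show π * u = z / 2 by rw [hzu]; ring] at hx
  refine hx.congr_fun fun m => ?_
  have hs : (-1 : ℝ) ^ m * (-1) ^ m = 1 := by
    rw [← pow_add]; exact Even.neg_one_pow ⟨m, rfl⟩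
  rw [(hasSum_sq_div_succ_sq_pow u m).tsum_eq, hzu, pow_add (-1 : ℝ) m 2, neg_one_sq, mul_one,
    mul_pow, mul_pow, show 2 * (m + 1) = 2 * m + 1 + 1 by ring, pow_succ (2 : ℝ) (2 * m + 1)]
  generalize (-1 : ℝ) ^ m = s at hs ⊢
  field_simp
  rw [sq, hs, mul_one]

noncomputable def thetaFactor (a z : ℝ) : ℝ := (1 - a * exp z) * (1 - a * exp (-z)) / (1 - a) ^ 2

lemma mul_exp_lt_one_of_mul_exp_abs {a z : ℝ} (ha : 0 ≤ a) (h : a * exp |z| < 1) : a * exp z < 1 :=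
  (mul_le_mul_of_nonneg_left (exp_le_exp.2 (le_abs_self z)) ha).trans_lt h

lemma lt_one_of_mul_exp_abs {a z : ℝ} (ha : 0 ≤ a) (h : a * exp |z| < 1) : a < 1 :=
  (le_mul_of_one_le_right ha (one_le_exp (abs_nonneg z))).trans_lt h

lemma pow_succ_mul_exp_abs_lt_one {a z : ℝ} (ha : 0 ≤ a) (h : a * exp |z| < 1) (i : ℕ) :
    a ^ (i + 1) * exp |z| < 1 :=
  (mul_le_mul_of_nonneg_right (pow_le_of_le_one ha (lt_one_of_mul_exp_abs ha h).le
    i.succ_ne_zero) (exp_pos _).le).trans_lt h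

lemma thetaFactor_pos {a z : ℝ} (ha : 0 ≤ a) (h : a * exp |z| < 1) : 0 < thetaFactor a z := by
  have h₁ := mul_exp_lt_one_of_mul_exp_abs ha h
  have h₂ := mul_exp_lt_one_of_mul_exp_abs (z := -z) ha (by rwa [abs_neg])
  have h₃ := lt_one_of_mul_exp_abs ha h
  unfold thetaFactor
  have : 0 < (1 - a) ^ 2 := by nlinarith
  exact div_pos (mul_pos (by linarith) (by linarith)) this

lemma hasSum_neg_log_thetaFactor {a z : ℝ} (ha : 0 ≤ a) (h : a * exp |z| < 1) :
    HasSum (fun m : ℕ => a ^ (m + 1) / (m + 1) * (2 * (cosh ((m + 1) * z) - 1)))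
      (-log (thetaFactor a z)) := by
  have h₁ := mul_exp_lt_one_of_mul_exp_abs ha h
  have h₂ := mul_exp_lt_one_of_mul_exp_abs (z := -z) ha (by rwa [abs_neg])
  have h₃ := lt_one_of_mul_exp_abs ha h
  have habs : ∀ {x : ℝ}, 0 ≤ x → x < 1 → |x| < 1 := fun hx hx1 => by rwa [abs_of_nonneg hx]
  have hsum := ((hasSum_pow_div_log_of_abs_lt_one (habs (by positivity) h₁)).add
    (hasSum_pow_div_log_of_abs_lt_one (habs (by positivity) h₂))).sub
    ((hasSum_pow_div_log_of_abs_lt_one (habs ha h₃)).mul_left 2)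
  have hlog : -log (thetaFactor a z) =
      -log (1 - a * exp z) + -log (1 - a * exp (-z)) - 2 * -log (1 - a) := by
    rw [thetaFactor, log_div (by nlinarith) (by nlinarith), log_mul (by linarith) (by linarith),
      log_pow]
    push_cast
    ring
  rw [hlog]
  refine hsum.congr_fun fun m => ?_
  rw [cosh_eq, mul_pow, mul_pow, ← exp_nat_mul, ← exp_nat_mul, mul_neg]
  push_cast
  ring

lemma thetaR_eq (q z : ℝ) :
    thetaR q z = 2 * sinh (z / 2) * ∏' i : ℕ, thetaFactor (q ^ (i + 1)) z := by
  unfold thetaR thetaFactor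
  rw [sinh_eq, neg_div]
  ring

-- The index `((i, m), k)` runs over the factors `i`, the terms `m` of the series of
-- `-log (1 - x)` and the terms `k` of the series of `cosh`.
noncomputable def thetaLogTerm (q z : ℝ) (p : (ℕ × ℕ) × ℕ) : ℝ :=
  2 * ((p.1.2 : ℝ) + 1) ^ (2 * p.2 + 1) * q ^ ((p.1.1 + 1) * (p.1.2 + 1)) * z ^ (2 * (p.2 + 1)) /
    (2 * (p.2 + 1))!

lemma thetaLogTerm_nonneg {q z : ℝ} (hq : 0 ≤ q) (p : (ℕ × ℕ) × ℕ) : 0 ≤ thetaLogTerm q z p := by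
  have : 0 ≤ z ^ (2 * (p.2 + 1)) := (even_two_mul _).pow_nonneg z
  unfold thetaLogTerm
  positivity

lemma hasSum_thetaLogTerm_inner (q z : ℝ) (i m : ℕ) :
    HasSum (fun k => thetaLogTerm q z ((i, m), k))
      (q ^ ((i + 1) * (m + 1)) / (m + 1) * (2 * (cosh ((m + 1) * z) - 1))) := by
  rw [show q ^ ((i + 1) * (m + 1)) / (m + 1) * (2 * (cosh ((m + 1) * z) - 1)) =
    2 * q ^ ((i + 1) * (m + 1)) / (m + 1) * (cosh ((m + 1) * z) - 1) by ring]
  refine ((hasSum_cosh_sub_one ((m + 1) * z)).mul_left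
    (2 * q ^ ((i + 1) * (m + 1)) / (m + 1))).congr_fun fun k => ?_
  rw [thetaLogTerm, mul_pow, show 2 * (k + 1) = 2 * k + 1 + 1 by ring, pow_succ _ (2 * k + 1)]
  field_simp
  ring

section

variable {q z : ℝ}

lemma summable_thetaLogTerm (hq : 0 ≤ q) (h : q * exp |z| < 1) : Summable (thetaLogTerm q z) := by
  have hq1 := lt_one_of_mul_exp_abs hq h
  have hρ : 0 ≤ q * exp |z| := by positivity
  refine (summable_prod_of_nonneg fun p => thetaLogTerm_nonneg hq p).2
    ⟨fun p => (hasSum_thetaLogTerm_inner q z p.1 p.2).summable, ?_⟩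
  have hmajorant :
      Summable fun p : ℕ × ℕ => 2 * (q * exp |z|) * (q ^ p.1 * (q * exp |z|) ^ p.2) :=
    ((summable_geometric_of_lt_one hq hq1).mul_of_nonneg (summable_geometric_of_lt_one hρ h)
      (fun i => by positivity) fun m => by positivity).mul_left _
  refine hmajorant.of_nonneg_of_le (fun p => tsum_nonneg fun k => thetaLogTerm_nonneg hq _)
    fun ⟨i, m⟩ => ?_
  have hm : (1 : ℝ) ≤ m + 1 := le_add_of_nonneg_left m.cast_nonneg
  rw [(hasSum_thetaLogTerm_inner q z i m).tsum_eq]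
  calc q ^ ((i + 1) * (m + 1)) / (m + 1) * (2 * (cosh ((m + 1) * z) - 1))
      ≤ q ^ ((i + 1) * (m + 1)) * (2 * exp ((m + 1) * |z|)) := by
        refine mul_le_mul (div_le_self (by positivity) hm) ?_
          (by linarith [one_le_cosh ((m + 1) * z)]) (by positivity)
        have := cosh_le_exp_abs ((m + 1) * z)
        rw [abs_mul, abs_of_pos (by positivity : (0 : ℝ) < m + 1)] at this
        linarith
    _ = 2 * ((q ^ i) ^ (m + 1) * (q * exp |z|) ^ (m + 1)) := by
        rw [show ((m : ℝ) + 1) = ((m + 1 : ℕ) : ℝ) by push_cast; ring, exp_nat_mul]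
        ring
    _ ≤ 2 * (q ^ i * (q * exp |z|) ^ (m + 1)) := by
        gcongr
        exact pow_le_of_le_one (pow_nonneg hq i) (pow_le_one₀ hq hq1.le) m.succ_ne_zero
    _ = 2 * (q * exp |z|) * (q ^ i * (q * exp |z|) ^ m) := by ring

lemma hasSum_log_thetaFactor (hq : 0 ≤ q) (h : q * exp |z| < 1) :
    HasSum (fun i : ℕ => log (thetaFactor (q ^ (i + 1)) z)) (-∑' p, thetaLogTerm q z p) := by
  have hpairs := (summable_thetaLogTerm hq h).hasSum.prod_fiberwise
    fun p => hasSum_thetaLogTerm_inner q z p.1 p.2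
  refine (hpairs.prod_fiberwise fun i => ?_).neg.congr_fun fun i => (neg_neg _).symm
  refine (hasSum_neg_log_thetaFactor (pow_nonneg hq _)
    (pow_succ_mul_exp_abs_lt_one hq h i)).congr_fun fun m => ?_
  rw [pow_mul]

lemma hasSum_eisenstein_thetaLogTerm (hq : 0 ≤ q) (h : q * exp |z| < 1) :
    HasSum (fun k : ℕ => 2 * (∑' n : ℕ, (∑ d ∈ (n + 1).divisors, (d : ℝ) ^ (2 * k + 1)) *
        q ^ (n + 1)) * z ^ (2 * (k + 1)) / (2 * (k + 1))!) (∑' p, thetaLogTerm q z p) := by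
  have hq1 : |q| < 1 := by
    rw [abs_of_nonneg hq]
    exact lt_one_of_mul_exp_abs hq h
  refine ((Equiv.prodComm _ _).hasSum_iff.2 (summable_thetaLogTerm hq h).hasSum).prod_fiberwise
    fun k => ?_
  rw [mul_right_comm, mul_div_right_comm]
  refine ((hasSum_lambert (2 * k + 1) hq1).mul_left
    (2 * z ^ (2 * (k + 1)) / (2 * (k + 1))!)).congr_fun fun p => ?_
  simp only [Function.comp_apply, Equiv.prodComm_apply, Prod.swap_prod_mk, thetaLogTerm]
  ring

lemma log_div_thetaR (hz : z ≠ 0) (hq : 0 ≤ q) (h : q * exp |z| < 1) :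
    log (z / thetaR q z) = ∑' p, thetaLogTerm q z p - log (sinh (z / 2) / (z / 2)) := by
  set S := ∑' p, thetaLogTerm q z p
  have hprod := Real.hasProd_of_hasSum_log
    (fun i => thetaFactor_pos (pow_nonneg hq (i + 1)) (pow_succ_mul_exp_abs_lt_one hq h i))
    (hasSum_log_thetaFactor hq h)
  have hz2 : z / 2 ≠ 0 := div_ne_zero hz two_ne_zero
  have hsinh : sinh (z / 2) / (z / 2) ≠ 0 := div_ne_zero (sinh_ne_zero.2 hz2) hz2
  rw [thetaR_eq, hprod.tprod_eq, show z / (2 * sinh (z / 2) * exp (-S)) =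
    (sinh (z / 2) / (z / 2))⁻¹ * exp S by rw [exp_neg]; field_simp,
    log_mul (inv_ne_zero hsinh) (exp_pos S).ne', log_inv, log_exp]
  ring

end

/-- `log (z/θ(e^z)) = 2 ∑_{k≥1} E_{2k}(q) z^{2k}/(2k)!` near `z = 0`. -/
theorem stmt9 (q : ℝ) (h0 : 0 < q) (h1 : q < 1) :
    ∃ r > (0 : ℝ), ∀ z : ℝ, z ≠ 0 → |z| < r →
      Real.log (z / thetaR q z) =
        2 * ∑' k : ℕ, Eis (k + 1) q * z ^ (2 * (k + 1)) / ((2 * (k + 1)).factorial : ℝ) := by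
  refine ⟨min (2 * π) (-log q), lt_min (by positivity) (neg_pos.2 (log_neg h0 h1)),
    fun z hz hzr => ?_⟩
  have hqz : q * exp |z| < 1 := by
    calc q * exp |z| < q * exp (-log q) := by gcongr; exact hzr.trans_le (min_le_right _ _)
      _ = 1 := by rw [exp_neg, exp_log h0, mul_inv_cancel₀ h0.ne']
  rw [log_div_thetaR hz h0.le hqz, ← tsum_mul_left]
  refine (((hasSum_eisenstein_thetaLogTerm h0.le hqz).sub
    (hasSum_log_sinh_div hz (hzr.trans_le (min_le_left _ _)))).congr_fun fun k => ?_).tsum_eq.symm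
  rw [Eis, show 2 * (k + 1) - 1 = 2 * k + 1 by omega]
  push_cast
  ring
end
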